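/- For all real x with 0 < |x| < π/2, (2·(sin x/x) + (tan x)/x)/3 > (sin x/x)^{2/3} · (tan x/x)^{1/3} > (1/2)·[(x/sin x)^2 + x/tan x]. -/

import Mathlib

/-!
Put `a = sin x / x` and `c = cos x`, so that `tan x / x = a / c`; everything is even in `x`, so
take `0 < x < π / 2`. The first inequality is the strict weighted AM–GM inequality for `a` and
`a / c`, which differ because `c < 1`. After cubing, the second one reads
`x⁶ cos x (x + sin x cos x)³ < 8 sin⁹ x`. On `[0, ∞)` the Taylor polynomials of `sin` and `cos`
alternately overestimate and underestimate them (integrate the previous bound from `0`), so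
`sin x`, `cos x` and `sin x cos x = sin (2x) / 2` may be replaced by Taylor polynomials of degrees
7, 8 and 9. What remains is `x¹⁵` times a polynomial of degree 24 in `t = x²`, which is positive
on `[0, 2.468] ⊇ [0, (π / 2)²]`.
-/

open Real
open scoped Nat

noncomputable def sinTaylor (n : ℕ) (x : ℝ) : ℝ :=
  ∑ i ∈ Finset.range n, (-1) ^ i * x ^ (2 * i + 1) / (2 * i + 1)!

noncomputable def cosTaylor (n : ℕ) (x : ℝ) : ℝ :=
  ∑ i ∈ Finset.range n, (-1) ^ i * x ^ (2 * i) / (2 * i)!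

lemma hasDerivAt_sinTaylor (n : ℕ) (x : ℝ) : HasDerivAt (sinTaylor n) (cosTaylor n x) x := by
  unfold sinTaylor cosTaylor
  refine HasDerivAt.fun_sum fun i _ => ?_
  refine (((hasDerivAt_pow (2 * i + 1) x).const_mul ((-1 : ℝ) ^ i)).div_const
    ((2 * i + 1)! : ℝ)).congr_deriv ?_
  rw [Nat.factorial_succ]
  push_cast
  field_simp

lemma cosTaylor_succ (n : ℕ) :
    cosTaylor (n + 1) =
      fun x : ℝ => 1 - ∑ i ∈ Finset.range n, (-1) ^ i * x ^ (2 * i + 2) / (2 * i + 2)! := by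
  ext x
  rw [cosTaylor, Finset.sum_range_succ']
  simp [pow_succ, mul_add, neg_div, Finset.sum_neg_distrib]
  ring

lemma hasDerivAt_cosTaylor_succ (n : ℕ) (x : ℝ) :
    HasDerivAt (cosTaylor (n + 1)) (-sinTaylor n x) x := by
  rw [cosTaylor_succ]
  refine ((hasDerivAt_const x (1 : ℝ)).sub (HasDerivAt.fun_sum fun i _ =>
    ((hasDerivAt_pow (2 * i + 2) x).const_mul ((-1 : ℝ) ^ i)).div_const
      ((2 * i + 2)! : ℝ))).congr_deriv ?_
  rw [sinTaylor, zero_sub, neg_inj]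
  refine Finset.sum_congr rfl fun i _ => ?_
  rw [Nat.factorial_succ (2 * i + 1)]
  push_cast
  field_simp
  ring

lemma nonneg_of_hasDerivAt_nonneg {f f' : ℝ → ℝ} (hf : ∀ y, HasDerivAt f (f' y) y)
    (h0 : f 0 = 0) (hf' : ∀ y, 0 ≤ y → 0 ≤ f' y) {x : ℝ} (hx : 0 ≤ x) : 0 ≤ f x := by
  have hmono : MonotoneOn f (Set.Ici 0) :=
    monotoneOn_of_hasDerivWithinAt_nonneg (convex_Ici 0)
      (fun y _ => (hf y).continuousAt.continuousWithinAt)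
      (fun y _ => (hf y).hasDerivWithinAt)
      (fun y hy => hf' y (interior_subset hy))
  simpa [h0] using hmono Set.self_mem_Ici hx hx

lemma sinTaylor_sub_sin_nonneg_of_cos {n : ℕ}
    (h : ∀ y, 0 ≤ y → 0 ≤ (-1) ^ n * (cosTaylor (n + 1) y - cos y)) {x : ℝ} (hx : 0 ≤ x) :
    0 ≤ (-1) ^ n * (sinTaylor (n + 1) x - sin x) :=
  nonneg_of_hasDerivAt_nonneg
    (fun y => ((hasDerivAt_sinTaylor _ y).sub (hasDerivAt_sin y)).const_mul _)
    (by simp [sinTaylor]) h hx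

lemma cosTaylor_sub_cos_nonneg (n : ℕ) {x : ℝ} (hx : 0 ≤ x) :
    0 ≤ (-1) ^ n * (cosTaylor (n + 1) x - cos x) := by
  induction n generalizing x with
  | zero => simpa [cosTaylor] using cos_le_one x
  | succ n ih =>
    refine nonneg_of_hasDerivAt_nonneg
      (fun y => ((hasDerivAt_cosTaylor_succ _ y).sub (hasDerivAt_cos y)).const_mul _)
      (by simp [cosTaylor_succ]) (fun y hy => ?_) hx
    have := sinTaylor_sub_sin_nonneg_of_cos (fun _ => ih) hy
    linarith [show (-1 : ℝ) ^ (n + 1) * (-sinTaylor (n + 1) y - -sin y)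
      = (-1) ^ n * (sinTaylor (n + 1) y - sin y) by ring]

lemma sinTaylor_sub_sin_nonneg (n : ℕ) {x : ℝ} (hx : 0 ≤ x) :
    0 ≤ (-1) ^ n * (sinTaylor (n + 1) x - sin x) :=
  sinTaylor_sub_sin_nonneg_of_cos (fun _ => cosTaylor_sub_cos_nonneg n) hx

noncomputable def gapPoly (t : ℝ) : ℝ :=
  64 / 945 - 4367 / 75600 * t + 1843 / 75600 * t ^ 2 - 50479 / 7938000 * t ^ 3
    + 127 / 117600 * t ^ 4 - 1829411 / 17146080000 * t ^ 5 + 220163 / 432081216000 * t ^ 6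
    + 9174881 / 4800902400000 * t ^ 7 - 33779797 / 86416243200000 * t ^ 8
    + 1129617547 / 23332385664000000 * t ^ 9 - 1419586843 / 326653399296000000 * t ^ 10
    + 5877195221 / 19599203957760000000 * t ^ 11 - 1932697183 / 117595223746560000000 * t ^ 12
    + 6948251521 / 9407617899724800000000 * t ^ 13 - 3908053 / 139372117032960000000 * t ^ 14
    + 9924367 / 10840053547008000000000 * t ^ 15 - 15138041 / 585362891538432000000000 * t ^ 16
    + 30571 / 48780240961536000000000 * t ^ 17 - 830971 / 64536258792112128000000000 * t ^ 18
    + 25303 / 114731126741532672000000000 * t ^ 19 - 6347 / 2065160281347588096000000000 * t ^ 20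
    + 971 / 28912243938866233344000000000 * t ^ 21 - 47 / 173473463633197400064000000000 * t ^ 22
    + 1 / 693893854532789600256000000000 * t ^ 23 - 1 / 262291877013394468896768000000000 * t ^ 24

lemma eight_mul_sinTaylor_pow_nine_sub_eq (x : ℝ) :
    8 * sinTaylor 4 x ^ 9 - x ^ 6 * cosTaylor 5 x * (x + sinTaylor 5 (2 * x) / 2) ^ 3
      = x ^ 15 * gapPoly (x ^ 2) := by
  norm_num [sinTaylor, cosTaylor, Finset.sum_range_succ, Nat.factorial, gapPoly]
  ring

lemma gapPoly_low_degree_gt {t : ℝ} (ht : 0 ≤ t) (ht' : t ≤ 2468 / 1000) :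
    6 / 10000 < 64 / 945 - 4367 / 75600 * t + 1843 / 75600 * t ^ 2 - 50479 / 7938000 * t ^ 3
      + 127 / 117600 * t ^ 4 - 1829411 / 17146080000 * t ^ 5 := by
  have hu : (0 : ℝ) ≤ 2468 / 1000 - t := by linarith
  nlinarith [pow_nonneg hu 2, pow_nonneg hu 3, pow_nonneg hu 4, pow_nonneg hu 5,
    mul_nonneg ht hu, mul_nonneg (pow_nonneg hu 3) ht, mul_nonneg (pow_nonneg hu 4) ht]

lemma gapPoly_pos {t : ℝ} (ht : 0 ≤ t) (ht' : t ≤ 2468 / 1000) : 0 < gapPoly t := by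
  have hle (k : ℕ) : t ^ k ≤ (2468 / 1000) ^ k := pow_le_pow_left₀ ht ht' k
  have hnonneg (k : ℕ) : 0 ≤ t ^ k := pow_nonneg ht k
  -- the negative terms, of even degree `≥ 8`, add up to more than `-6 / 10000` at `t = 2.468`
  rw [gapPoly]
  linarith [gapPoly_low_degree_gt ht ht', hle 8, hle 10, hle 12, hle 14, hle 16, hle 18, hle 20,
    hle 22, hle 24, hnonneg 6, hnonneg 7, hnonneg 9, hnonneg 11, hnonneg 13, hnonneg 15,
    hnonneg 17, hnonneg 19, hnonneg 21, hnonneg 23]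

lemma pow_six_mul_cos_mul_add_sin_mul_cos_pow_three_lt {x : ℝ} (hx0 : 0 < x) (hx : x < π / 2) :
    x ^ 6 * cos x * (x + sin x * cos x) ^ 3 < 8 * sin x ^ 9 := by
  have hx2 : x ^ 2 ≤ 2468 / 1000 := by nlinarith [pi_lt_d4]
  have hcos : 0 < cos x := cos_pos_of_mem_Ioo ⟨by linarith, hx⟩
  have hsin : 0 < sin x := sin_pos_of_pos_of_lt_pi hx0 (by linarith [pi_pos])
  have hsin_ge : sinTaylor 4 x ≤ sin x := by
    have := sinTaylor_sub_sin_nonneg 3 hx0.le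
    norm_num at this
    linarith
  have hcos_le : cos x ≤ cosTaylor 5 x := by
    have := cosTaylor_sub_cos_nonneg 4 hx0.le
    norm_num at this
    linarith
  have hsin_mul_cos_le : sin x * cos x ≤ sinTaylor 5 (2 * x) / 2 := by
    have := sinTaylor_sub_sin_nonneg 4 (by linarith : 0 ≤ 2 * x)
    rw [sin_two_mul] at this
    norm_num at this
    linarith
  have hpoly :
      x ^ 6 * cosTaylor 5 x * (x + sinTaylor 5 (2 * x) / 2) ^ 3 < 8 * sinTaylor 4 x ^ 9 := by
    have := mul_pos (pow_pos hx0 15) (gapPoly_pos (sq_nonneg x) hx2)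
    linarith [eight_mul_sinTaylor_pow_nine_sub_eq x]
  calc x ^ 6 * cos x * (x + sin x * cos x) ^ 3
      ≤ x ^ 6 * cosTaylor 5 x * (x + sinTaylor 5 (2 * x) / 2) ^ 3 := by
        gcongr
        exact mul_nonneg (by positivity) (hcos.le.trans hcos_le)
    _ < 8 * sinTaylor 4 x ^ 9 := hpoly
    _ ≤ 8 * sin x ^ 9 := by gcongr 8 * ?_; exact (Odd.pow_le_pow ⟨4, rfl⟩).2 hsin_ge

lemma rpow_two_thirds_mul_rpow_one_third {a b : ℝ} (ha : 0 ≤ a) (hb : 0 ≤ b) :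
    a ^ ((2 : ℝ) / 3) * b ^ ((1 : ℝ) / 3) = (a ^ 2 * b) ^ (3⁻¹ : ℝ) := by
  rw [Real.mul_rpow (by positivity) hb, ← Real.rpow_natCast, ← Real.rpow_mul ha]
  norm_num

lemma geom_lt_huygens {x : ℝ} (hx0 : 0 < x) (hx : x < π / 2) :
    (sin x / x) ^ ((2 : ℝ) / 3) * (tan x / x) ^ ((1 : ℝ) / 3)
      < (2 * (sin x / x) + tan x / x) / 3 := by
  have hcos : 0 < cos x := cos_pos_of_mem_Ioo ⟨by linarith, hx⟩
  have hsin : 0 < sin x := sin_pos_of_pos_of_lt_pi hx0 (by linarith [pi_pos])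
  have hcos_lt : cos x < 1 := by nlinarith [sin_sq_add_cos_sq x]
  have hlt : sin x / x < tan x / x := by
    rw [tan_eq_sin_div_cos]
    gcongr
    exact (lt_div_iff₀ hcos).2 (mul_lt_of_lt_one_right hsin hcos_lt)
  have := (Real.geom_mean_lt_arith_mean2_weighted_iff_of_pos (w₁ := 2 / 3) (w₂ := 1 / 3)
    (by norm_num) (by norm_num) (by positivity) (hlt.trans' (by positivity)).le
    (by norm_num)).2 hlt.ne
  linarith

lemma dualWilker_lt_geom {x : ℝ} (hx0 : 0 < x) (hx : x < π / 2) :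
    1 / 2 * ((x / sin x) ^ 2 + x / tan x)
      < (sin x / x) ^ ((2 : ℝ) / 3) * (tan x / x) ^ ((1 : ℝ) / 3) := by
  have hcos : 0 < cos x := cos_pos_of_mem_Ioo ⟨by linarith, hx⟩
  have hsin : 0 < sin x := sin_pos_of_pos_of_lt_pi hx0 (by linarith [pi_pos])
  have key := pow_six_mul_cos_mul_add_sin_mul_cos_pow_three_lt hx0 hx
  rw [tan_eq_sin_div_cos, rpow_two_thirds_mul_rpow_one_third (by positivity) (by positivity),
    Real.lt_rpow_inv_iff_of_pos (by positivity) (by positivity) three_pos, Real.rpow_ofNat]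
  calc (1 / 2 * ((x / sin x) ^ 2 + x / (sin x / cos x))) ^ 3
      = x ^ 3 * (x + sin x * cos x) ^ 3 / (8 * sin x ^ 6) := by field_simp; ring
    _ < sin x ^ 3 / (x ^ 3 * cos x) := by
      rw [div_lt_div_iff₀ (by positivity) (by positivity)]
      linarith
    _ = (sin x / x) ^ 2 * (sin x / cos x / x) := by field_simp

theorem stmt_7 (x : ℝ) (h1 : 0 < |x|) (h2 : |x| < π / 2) :
    (2 * (sin x / x) + tan x / x) / 3 > (sin x / x) ^ ((2 : ℝ) / 3) * (tan x / x) ^ ((1 : ℝ) / 3) ∧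
      (sin x / x) ^ ((2 : ℝ) / 3) * (tan x / x) ^ ((1 : ℝ) / 3) >
        (1 / 2) * ((x / sin x) ^ 2 + x / tan x) := by
  have of_pos (y : ℝ) (hy0 : 0 < y) (hy : y < π / 2) :=
    And.intro (geom_lt_huygens hy0 hy) (dualWilker_lt_geom hy0 hy)
  rcases le_or_gt 0 x with hx | hx
  · rw [abs_of_nonneg hx] at h1 h2
    exact of_pos x h1 h2
  · rw [abs_of_neg hx] at h1 h2
    simpa [neg_div_neg_eq] using of_pos (-x) h1 h2
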